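/- arXiv:2112.14586 — 4 statements merged into one kernel-verified Lean document; each statement's English description precedes it below -/
import Mathlib

section
/- Let q > 0, a_1, …, a_T ≥ 0, Δ_0 = 0, and define Δ_t recursively by δ_t = a_t q / Δ_t, Δ_t = Δ_{t-1} + δ_t (so Δ_t is the positive root of Δ_t² = Δ_{t-1}Δ_t + a_t q). Then Δ_T ≤ sqrt(2 q Σ_{t=1}^T a_t). -/
/-!
`Δ_t` is the positive root of `x² = Δ_{t-1} x + a_t q`. Since `Δ_{t-1} Δ_t ≤ (Δ_{t-1}² + Δ_t²) / 2`
(convexity of `x ↦ x²`), this gives `Δ_t² ≤ Δ_{t-1}² + 2 q a_t`, and summing over `t` yields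
`Δ_T² ≤ 2 q Σ a_t`.
-/

open Finset

lemma half_add_sqrt_sq_eq {d c : ℝ} (h : 0 ≤ d ^ 2 + 4 * c) :
    ((d + √(d ^ 2 + 4 * c)) / 2) ^ 2 = d * ((d + √(d ^ 2 + 4 * c)) / 2) + c := by
  have hs := Real.sq_sqrt h
  linear_combination hs / 4

lemma sq_le_sq_add_two_mul_of_sq_eq {x d c : ℝ} (h : x ^ 2 = d * x + c) :
    x ^ 2 ≤ d ^ 2 + 2 * c := by
  nlinarith [sq_nonneg (x - d)]

lemma le_add_sum_Icc_of_le_add {g b : ℕ → ℝ} {T : ℕ}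
    (h : ∀ t ∈ Icc 1 T, g t ≤ g (t - 1) + b t) :
    g T ≤ g 0 + ∑ t ∈ Icc 1 T, b t := by
  induction T with
  | zero => simp
  | succ n ih =>
    have hn : g (n + 1) ≤ g n + b (n + 1) := h (n + 1) (by simp)
    have ih' := ih fun t ht => h t (Icc_subset_Icc_right n.le_succ ht)
    rw [sum_Icc_succ_top (by omega)]
    linarith

/-- Refined isotuning bound: `Δ_T ≤ sqrt(2 q Σ a_t)`. -/
theorem isotuning_refined_bound
    (T : ℕ) (q : ℝ) (hq : 0 < q)
    (a : ℕ → ℝ) (ha : ∀ t ∈ Finset.Icc 1 T, 0 ≤ a t)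
    (Δ : ℕ → ℝ) (hΔ0 : Δ 0 = 0)
    (hΔ : ∀ t ∈ Finset.Icc 1 T,
      Δ t = (Δ (t-1) + Real.sqrt ((Δ (t-1))^2 + 4 * (a t * q))) / 2) :
    Δ T ≤ Real.sqrt (2 * q * ∑ t ∈ Finset.Icc 1 T, a t) := by
  have hstep : ∀ t ∈ Icc 1 T, Δ t ^ 2 ≤ Δ (t - 1) ^ 2 + 2 * q * a t := by
    intro t ht
    have hc : 0 ≤ a t * q := mul_nonneg (ha t ht) hq.le
    rw [hΔ t ht]
    exact (sq_le_sq_add_two_mul_of_sq_eq (half_add_sqrt_sq_eq (by positivity))).trans_eq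
      (by ring)
  have hsq := le_add_sum_Icc_of_le_add (g := fun t => Δ t ^ 2) hstep
  simp only [hΔ0, ← mul_sum] at hsq
  exact (le_abs_self _).trans (Real.abs_le_sqrt (by linarith))
end

section
/- For all x ∈ ℝ, (e^x − x − 1)(1 − x/3) ≤ x²/2. -/
/-!
The gap `g x = x ^ 2 / 2 - (exp x - x - 1) * (1 - x / 3)` satisfies `g 0 = g' 0 = 0` and
`g'' x = (1 - (1 - x) * exp x) / 3`, which is nonnegative because `1 - x ≤ exp (-x)`.
So `g` is convex with a critical point at `0`, hence attains its minimum `0` there.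
-/

open Real Set

lemma one_sub_mul_exp_le_one (x : ℝ) : (1 - x) * exp x ≤ 1 :=
  calc (1 - x) * exp x ≤ exp (-x) * exp x :=
        mul_le_mul_of_nonneg_right (one_sub_le_exp_neg x) (exp_pos x).le
    _ = 1 := by rw [← exp_add, neg_add_cancel, exp_zero]

lemma convexOn_univ_of_hasDerivAt2_nonneg {f f' f'' : ℝ → ℝ}
    (hf : ∀ x, HasDerivAt f (f' x) x) (hf' : ∀ x, HasDerivAt f' (f'' x) x)
    (hf'' : ∀ x, 0 ≤ f'' x) : ConvexOn ℝ univ f :=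
  convexOn_of_hasDerivWithinAt2_nonneg convex_univ
    (continuous_iff_continuousAt.2 fun x ↦ (hf x).continuousAt).continuousOn
    (fun x _ ↦ (hf x).hasDerivWithinAt) (fun x _ ↦ (hf' x).hasDerivWithinAt) fun x _ ↦ hf'' x

lemma ConvexOn.isMinOn_of_hasDerivAt_eq_zero {S : Set ℝ} {f : ℝ → ℝ} {a : ℝ}
    (hf : ConvexOn ℝ S f) (ha : a ∈ interior S) (hfa : HasDerivAt f 0 a) : IsMinOn f S a :=
  hf.isMinOn_of_rightDeriv_eq_zero ha
    (hfa.hasDerivWithinAt.derivWithin (uniqueDiffWithinAt_Ioi a))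

noncomputable def expQuadraticGap (x : ℝ) : ℝ := x ^ 2 / 2 - (exp x - x - 1) * (1 - x / 3)

lemma hasDerivAt_expQuadraticGap (x : ℝ) :
    HasDerivAt expQuadraticGap ((x + 2 - (2 - x) * exp x) / 3) x := by
  have hexp := hasDerivAt_exp x
  have hid := hasDerivAt_id' x
  refine (((hasDerivAt_pow 2 x).div_const 2).sub
    (((hexp.sub hid).sub_const 1).mul ((hid.div_const 3).const_sub 1))).congr_deriv ?_
  simp only [Pi.sub_apply, Nat.cast_ofNat]
  ring

lemma hasDerivAt_deriv_expQuadraticGap (x : ℝ) :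
    HasDerivAt (fun x ↦ (x + 2 - (2 - x) * exp x) / 3) ((1 - (1 - x) * exp x) / 3) x := by
  have hid := hasDerivAt_id' x
  refine (((hid.add_const 2).sub ((hid.const_sub 2).mul (hasDerivAt_exp x))).div_const 3
    ).congr_deriv ?_
  ring

lemma convexOn_expQuadraticGap : ConvexOn ℝ univ expQuadraticGap :=
  convexOn_univ_of_hasDerivAt2_nonneg hasDerivAt_expQuadraticGap
    hasDerivAt_deriv_expQuadraticGap fun x ↦ by linarith [one_sub_mul_exp_le_one x]

lemma expQuadraticGap_nonneg (x : ℝ) : 0 ≤ expQuadraticGap x := by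
  have hcrit : HasDerivAt expQuadraticGap 0 0 := by
    simpa using hasDerivAt_expQuadraticGap 0
  have hmin := convexOn_expQuadraticGap.isMinOn_of_hasDerivAt_eq_zero (by simp) hcrit
  simpa [expQuadraticGap] using hmin (mem_univ x)

/-- Sharp quadratic bound on the exponential. -/
theorem exp_quadratic_bound (x : ℝ) :
    (Real.exp x - x - 1) * (1 - x / 3) ≤ x ^ 2 / 2 :=
  sub_nonneg.1 (expQuadraticGap_nonneg x)
end

section
/- Consider online gradient descent on a closed bounded convex set X ⊆ ℝ^N with update x_{t+1} = Π_X(x_t − η_t ∇_t), where ∇_t = ∇ℓ_t(x_t), each ℓ_t is α_t-strongly convex (α_t ≥ 0), the learning rates satisfy η_t > 0 and 1/η_t − α_t − 1/η_{t-1} ≥ 0 for all t (with 1/η_0 = 0 allowed formally). Then for any x* ∈ X, 2 Σ_{t=1}^T (ℓ_t(x_t) − ℓ_t(x*)) ≤ (max_{t∈[T]} ‖x_t − x*‖₂²)(1/η_T − Σ_{t=1}^T α_t − 1/η_0) + Σ_{t=1}^T η_t ‖∇_t‖₂² + (1/η_0)‖x_1 − x*‖₂². -/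
open scoped RealInnerProductSpace

/-!
Write `d t = ‖x t - x*‖²`. Since `x (t+1)` is the nearest point of `X` to `x t - η t • ∇ t`
and `x* ∈ X`, the angle at `x (t+1)` is obtuse, so `d (t+1) ≤ ‖x t - η t • ∇ t - x*‖²`;
expanding and combining with strong convexity gives, per round,
`2 (ℓ t (x t) - ℓ t x*) ≤ (d t - d (t+1)) / η t - α t d t + η t ‖∇ t‖²`.
Summing by parts turns the right side into `∑ d t (1/η t - α t - 1/η (t-1))` plus boundary
terms; the weights are nonnegative, so each `d t` may be replaced by `max d`, and then the
weights telescope.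
-/

section Projection

variable {E : Type*} [NormedAddCommGroup E] [InnerProductSpace ℝ E]

theorem norm_sub_sq_le_of_forall_norm_sub_le {X : Set E} (hX : Convex ℝ X) {p z w : E}
    (hp : p ∈ X) (hmin : ∀ y ∈ X, ‖p - z‖ ≤ ‖y - z‖) (hw : w ∈ X) :
    ‖p - w‖ ^ 2 ≤ ‖z - w‖ ^ 2 := by
  have : Nonempty X := ⟨⟨p, hp⟩⟩
  have hinf : ‖z - p‖ = ⨅ y : X, ‖z - y‖ :=
    le_antisymm
      (le_ciInf fun y => by simpa only [norm_sub_rev z] using hmin y y.2)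
      (ciInf_le ⟨0, Set.forall_mem_range.2 fun _ => norm_nonneg _⟩ (⟨p, hp⟩ : X))
  have hobtuse : ⟪z - p, w - p⟫ ≤ 0 :=
    (norm_eq_iInf_iff_real_inner_le_zero hX hp).1 hinf w hw
  have hsplit : ‖z - w‖ ^ 2 = ‖z - p‖ ^ 2 - 2 * ⟪z - p, w - p⟫ + ‖w - p‖ ^ 2 := by
    rw [← norm_sub_sq_real]
    congr 2
    abel
  rw [hsplit, norm_sub_rev p w]
  nlinarith [sq_nonneg ‖z - p‖]

theorem two_mul_sub_le_of_projected_gradient_step {X : Set E} (hX : Convex ℝ X)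
    {f : E → ℝ} {a η : ℝ} {x g p u : E} (hη : 0 < η) (hu : u ∈ X)
    (hf : f x + ⟪u - x, g⟫ + a / 2 * ‖u - x‖ ^ 2 ≤ f u)
    (hp : p ∈ X) (hmin : ∀ y ∈ X, ‖p - (x - η • g)‖ ≤ ‖y - (x - η • g)‖) :
    2 * (f x - f u) ≤
      (‖x - u‖ ^ 2 - ‖p - u‖ ^ 2) * (1 / η) - a * ‖x - u‖ ^ 2 + η * ‖g‖ ^ 2 := by
  have hstep : ‖p - u‖ ^ 2 ≤ ‖x - u‖ ^ 2 - 2 * η * ⟪x - u, g⟫ + η ^ 2 * ‖g‖ ^ 2 := by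
    have h := norm_sub_sq_le_of_forall_norm_sub_le hX hp hmin hu
    rw [show x - η • g - u = (x - u) - η • g by abel, norm_sub_sq_real (x - u),
      real_inner_smul_right, norm_smul, Real.norm_eq_abs, abs_of_pos hη] at h
    linarith
  have hdescent : 2 * ⟪x - u, g⟫ - η * ‖g‖ ^ 2 ≤ (‖x - u‖ ^ 2 - ‖p - u‖ ^ 2) * (1 / η) := by
    rw [mul_one_div, le_div_iff₀ hη]
    linarith
  have hf' : f x - f u ≤ ⟪x - u, g⟫ - a / 2 * ‖x - u‖ ^ 2 := by
    rw [← neg_sub x u, inner_neg_left, norm_neg] at hf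
    linarith
  linarith

end Projection

/-- Summation by parts; the boundary term `d (T + 1) * c T` on the left is what makes the
bound inductive in `T`. -/
theorem sum_by_parts_le {T : ℕ} {c d α : ℕ → ℝ} {M : ℝ}
    (hd : ∀ t ∈ Finset.Icc 1 T, d t ≤ M)
    (hc : ∀ t ∈ Finset.Icc 1 T, 0 ≤ c t - α t - c (t - 1)) :
    ∑ t ∈ Finset.Icc 1 T, ((d t - d (t + 1)) * c t - α t * d t) + d (T + 1) * c T ≤
      M * (c T - ∑ t ∈ Finset.Icc 1 T, α t - c 0) + c 0 * d 1 := by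
  induction T with
  | zero => simp [mul_comm]
  | succ T ih =>
    have hT : T + 1 ∈ Finset.Icc 1 (T + 1) := Finset.right_mem_Icc.mpr (by omega)
    have hsub : Finset.Icc 1 T ⊆ Finset.Icc 1 (T + 1) := Finset.Icc_subset_Icc_right (by omega)
    have ih := ih (fun t ht => hd t (hsub ht)) (fun t ht => hc t (hsub ht))
    have hinc : d (T + 1) * (c (T + 1) - α (T + 1) - c T) ≤
        M * (c (T + 1) - α (T + 1) - c T) :=
      mul_le_mul_of_nonneg_right (hd _ hT) (hc _ hT)
    rw [Finset.sum_Icc_succ_top (by omega), Finset.sum_Icc_succ_top (by omega)]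
    linarith

/-- `η 0 = 0` encodes the paper's `1 / η_0 = 0`, since `1 / 0 = 0` in Lean. -/
theorem aogd_regret_general
    (N T : ℕ) (hT : 1 ≤ T)
    (X : Set (EuclideanSpace ℝ (Fin N)))
    (hXc : Convex ℝ X)
    (ℓ : ℕ → EuclideanSpace ℝ (Fin N) → ℝ)
    (α : ℕ → ℝ)
    (x : ℕ → EuclideanSpace ℝ (Fin N))
    (G : ℕ → EuclideanSpace ℝ (Fin N))
    (hsc : ∀ t ∈ Finset.Icc 1 T, ∀ y ∈ X,
      ℓ t (x t) + ⟪y - x t, G t⟫ + α t / 2 * ‖y - x t‖ ^ 2 ≤ ℓ t y)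
    (η : ℕ → ℝ)
    (hη : ∀ t ∈ Finset.Icc 1 T, 0 < η t ∧ 0 ≤ 1 / η t - α t - 1 / η (t - 1))
    (hproj : ∀ t ∈ Finset.Icc 1 T, x (t + 1) ∈ X ∧
      ∀ y ∈ X, ‖x (t + 1) - (x t - η t • G t)‖ ≤ ‖y - (x t - η t • G t)‖)
    (xstar : EuclideanSpace ℝ (Fin N)) (hxs : xstar ∈ X) :
    2 * ∑ t ∈ Finset.Icc 1 T, (ℓ t (x t) - ℓ t xstar) ≤
      ((Finset.Icc 1 T).sup' (Finset.nonempty_Icc.mpr hT)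
          (fun t => ‖x t - xstar‖ ^ 2)) *
        (1 / η T - ∑ t ∈ Finset.Icc 1 T, α t - 1 / η 0)
      + ∑ t ∈ Finset.Icc 1 T, η t * ‖G t‖ ^ 2
      + (1 / η 0) * ‖x 1 - xstar‖ ^ 2 := by
  set d : ℕ → ℝ := fun t => ‖x t - xstar‖ ^ 2
  have hsteps : 2 * ∑ t ∈ Finset.Icc 1 T, (ℓ t (x t) - ℓ t xstar) ≤
      ∑ t ∈ Finset.Icc 1 T, ((d t - d (t + 1)) * (1 / η t) - α t * d t) +
        ∑ t ∈ Finset.Icc 1 T, η t * ‖G t‖ ^ 2 := by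
    rw [Finset.mul_sum, ← Finset.sum_add_distrib]
    refine Finset.sum_le_sum fun t ht => ?_
    exact two_mul_sub_le_of_projected_gradient_step hXc (hη t ht).1 hxs (hsc t ht xstar hxs)
      (hproj t ht).1 (hproj t ht).2
  have hparts := sum_by_parts_le (c := fun t => 1 / η t)
    (M := (Finset.Icc 1 T).sup' (Finset.nonempty_Icc.mpr hT) d)
    (fun t ht => Finset.le_sup' d ht) (fun t ht => (hη t ht).2)
  have hlast : 0 ≤ d (T + 1) * (1 / η T) := by
    have := (hη T (Finset.right_mem_Icc.mpr hT)).1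
    positivity
  linarith

/-- AOGD regret lemma for online gradient descent with strongly convex losses.
Here `1/η 0` may formally be `0` (Lean's convention `1/0 = 0`). -/
theorem aogd_regret
    (N T : ℕ) (hT : 1 ≤ T)
    (X : Set (EuclideanSpace ℝ (Fin N)))
    (hXc : Convex ℝ X) (hXcl : IsClosed X) (hXb : Bornology.IsBounded X)
    (ℓ : ℕ → EuclideanSpace ℝ (Fin N) → ℝ)
    (α : ℕ → ℝ) (hα : ∀ t ∈ Finset.Icc 1 T, 0 ≤ α t)
    (x : ℕ → EuclideanSpace ℝ (Fin N)) (hx1 : x 1 ∈ X)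
    (G : ℕ → EuclideanSpace ℝ (Fin N))
    (hsc : ∀ t ∈ Finset.Icc 1 T, ∀ y ∈ X,
      ℓ t (x t) + ⟪y - x t, G t⟫ + α t / 2 * ‖y - x t‖ ^ 2 ≤ ℓ t y)
    (η : ℕ → ℝ) (hη0 : 0 ≤ η 0)
    (hη : ∀ t ∈ Finset.Icc 1 T, 0 < η t ∧ 0 ≤ 1 / η t - α t - 1 / η (t - 1))
    (hproj : ∀ t ∈ Finset.Icc 1 T, x (t + 1) ∈ X ∧
      ∀ y ∈ X, ‖x (t + 1) - (x t - η t • G t)‖ ≤ ‖y - (x t - η t • G t)‖)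
    (xstar : EuclideanSpace ℝ (Fin N)) (hxs : xstar ∈ X) :
    2 * ∑ t ∈ Finset.Icc 1 T, (ℓ t (x t) - ℓ t xstar) ≤
      ((Finset.Icc 1 T).sup' (Finset.nonempty_Icc.mpr hT)
          (fun t => ‖x t - xstar‖ ^ 2)) *
        (1 / η T - ∑ t ∈ Finset.Icc 1 T, α t - 1 / η 0)
      + ∑ t ∈ Finset.Icc 1 T, η t * ‖G t‖ ^ 2
      + (1 / η 0) * ‖x 1 - xstar‖ ^ 2 :=
  aogd_regret_general N T hT X hXc ℓ α x G hsc η hη hproj xstar hxs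
end

section
/- For scale-free online gradient descent with null updates and isotuning: with δ̂_t(y) = q‖ℓ_t‖²/(2y) (q > 0), Δ_0 = 0, δ_t = δ̂_t(Δ_{t-1}) if δ̂_t(Δ_{t-1}) ≤ Δ_{t-1} and δ_t = sqrt(q/2)‖ℓ_t‖ otherwise, and Δ_t = Δ_{t-1} + δ_t, it holds for all T that sqrt((q/2) Σ_{t=1}^T ‖ℓ_t‖²) ≤ Δ_T ≤ sqrt(q Σ_{t=1}^T ‖ℓ_t‖²) + sqrt(q/2) max_{t∈[T]} ‖ℓ_t‖. -/
/-!
With `a_t = √(q/2) ‖ℓ_t‖` the recursion reads `Δ_t = Δ_{t-1} + a_t² / Δ_{t-1}` when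
`a_t ≤ Δ_{t-1}` and `Δ_t = Δ_{t-1} + a_t` otherwise. Either way `Δ_t² ≥ Δ_{t-1}² + a_t²`, which
gives the lower bound. For the upper bound, `Δ_t ≤ √(2 S_t) + max a` with `S_t = Σ_{s ≤ t} a_s²`
is an invariant: a null update happens only when `Δ_{t-1} < a_t`, so `Δ_t < 2 a_t`; a regular
update either starts below `√(2 S_t)` and adds at most `a_t`, or starts above it and adds at most
`a_t² / √(2 S_t) ≤ √(2 S_t) - √(2 S_{t-1})`.
-/

open Finset Real

noncomputable def isoStep (D a : ℝ) : ℝ := D + if a ≤ D then a ^ 2 / D else a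

lemma le_isoStep {D a : ℝ} (hD : 0 ≤ D) : D ≤ isoStep D a := by
  have : 0 ≤ a ^ 2 / D := by positivity
  unfold isoStep
  split_ifs <;> linarith

lemma sq_add_sq_le_isoStep_sq {D a : ℝ} (hD : 0 ≤ D) (ha : 0 ≤ a) :
    D ^ 2 + a ^ 2 ≤ isoStep D a ^ 2 := by
  unfold isoStep
  split_ifs with h
  · rcases hD.eq_or_lt with rfl | hD
    · simp [le_antisymm h ha]
    · have hmul : D * (a ^ 2 / D) = a ^ 2 := by field_simp
      nlinarith [sq_nonneg (a ^ 2 / D)]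
  · nlinarith

/-- The isotuning inequality: by AM-GM, `√A √(A + 2c) ≤ A + c`. -/
lemma div_sqrt_add_two_mul_le_sub {A c : ℝ} (hA : 0 ≤ A) (hc : 0 ≤ c) :
    c / √(A + 2 * c) ≤ √(A + 2 * c) - √A := by
  rcases (add_nonneg hA (mul_nonneg zero_le_two hc)).eq_or_lt with hB | hB
  · rw [← hB]
    have : A = 0 := by linarith
    simp [this]
  · have hsB := Real.sqrt_pos.mpr hB
    have hAB : √A * √(A + 2 * c) ≤ A + c := by
      nlinarith [sq_nonneg (√A - √(A + 2 * c)), Real.sq_sqrt hA, Real.sq_sqrt hB.le]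
    rw [div_le_iff₀ hsB, sub_mul, Real.mul_self_sqrt hB.le]
    linarith

lemma isoStep_le_sqrt_add {D a A M : ℝ} (ha : 0 ≤ a) (haM : a ≤ M) (hA : 0 ≤ A)
    (hD : D ≤ √A + M) : isoStep D a ≤ √(A + 2 * a ^ 2) + M := by
  rcases ha.eq_or_lt with rfl | ha
  · simpa [isoStep] using hD
  have ha_le : a ≤ √(A + 2 * a ^ 2) := Real.le_sqrt_of_sq_le (by nlinarith)
  unfold isoStep
  split_ifs with h
  · by_cases hDB : D ≤ √(A + 2 * a ^ 2)
    · have : a ^ 2 / D ≤ a := div_le_of_le_mul₀ (by linarith) ha.le (by nlinarith)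
      linarith
    · have : a ^ 2 / D ≤ a ^ 2 / √(A + 2 * a ^ 2) :=
        div_le_div_of_nonneg_left (sq_nonneg a) (by linarith) (by linarith)
      linarith [div_sqrt_add_two_mul_le_sub hA (sq_nonneg a)]
  · linarith

section Sequence

variable {T : ℕ} {a D : ℕ → ℝ}

lemma nonneg_of_isoStep (hD0 : D 0 = 0)
    (hD : ∀ t < T, D (t + 1) = isoStep (D t) (a (t + 1))) : ∀ t ≤ T, 0 ≤ D t := by
  intro t ht
  induction t with
  | zero => exact hD0.ge
  | succ t ih => exact hD t ht ▸ (ih (by omega)).trans (le_isoStep (ih (by omega)))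

lemma sum_sq_le_sq_of_isoStep (ha : ∀ t, 0 ≤ a t) (hD0 : D 0 = 0)
    (hD : ∀ t < T, D (t + 1) = isoStep (D t) (a (t + 1))) :
    ∀ t ≤ T, ∑ s ∈ Icc 1 t, a s ^ 2 ≤ D t ^ 2 := by
  intro t ht
  induction t with
  | zero => simpa using sq_nonneg (D 0)
  | succ t ih =>
    rw [sum_Icc_succ_top (by omega), hD t ht]
    linarith [ih (by omega), sq_add_sq_le_isoStep_sq (nonneg_of_isoStep hD0 hD t (by omega))
      (ha (t + 1))]

lemma le_sqrt_two_mul_sum_sq_add_of_isoStep {M : ℝ} (ha : ∀ t, 0 ≤ a t) (hM0 : 0 ≤ M)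
    (haM : ∀ t ∈ Icc 1 T, a t ≤ M) (hD0 : D 0 = 0)
    (hD : ∀ t < T, D (t + 1) = isoStep (D t) (a (t + 1))) :
    ∀ t ≤ T, D t ≤ √(2 * ∑ s ∈ Icc 1 t, a s ^ 2) + M := by
  intro t ht
  induction t with
  | zero => simpa [hD0] using hM0
  | succ t ih =>
    rw [sum_Icc_succ_top (by omega), mul_add, hD t ht]
    exact isoStep_le_sqrt_add (ha _) (haM _ (mem_Icc.mpr ⟨by omega, by omega⟩))
      (by positivity) (ih (by omega))

end Sequence

/-- The null-update test `δ̂_t(Δ_{t-1}) > Δ_{t-1}` appears in its equivalent form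
`sqrt(q/2) ‖ℓ_t‖ > Δ_{t-1}`. -/
theorem scale_free_ogd_delta_bounds
    {E : Type*} [NormedAddCommGroup E]
    (T : ℕ) (hT : 1 ≤ T) (q : ℝ) (hq : 0 < q)
    (ℓ : ℕ → E) (Δ : ℕ → ℝ) (hΔ0 : Δ 0 = 0)
    (hrec : ∀ t ∈ Finset.Icc 1 T,
      Δ t = Δ (t-1) +
        (if Real.sqrt (q / 2) * ‖ℓ t‖ ≤ Δ (t-1)
          then q * ‖ℓ t‖ ^ 2 / (2 * Δ (t-1))
          else Real.sqrt (q / 2) * ‖ℓ t‖)) :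
    Real.sqrt ((q / 2) * ∑ t ∈ Finset.Icc 1 T, ‖ℓ t‖ ^ 2) ≤ Δ T ∧
    Δ T ≤ Real.sqrt (q * ∑ t ∈ Finset.Icc 1 T, ‖ℓ t‖ ^ 2) +
      Real.sqrt (q / 2) *
        (Finset.Icc 1 T).sup' (Finset.nonempty_Icc.mpr hT) (fun t => ‖ℓ t‖) := by
  set a : ℕ → ℝ := fun t => √(q / 2) * ‖ℓ t‖
  have ha : ∀ t, 0 ≤ a t := fun t => by positivity
  have ha_sq : ∀ t, a t ^ 2 = q / 2 * ‖ℓ t‖ ^ 2 := fun t => by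
    rw [mul_pow, Real.sq_sqrt (by positivity)]
  have hΔ : ∀ t < T, Δ (t + 1) = isoStep (Δ t) (a (t + 1)) := fun t ht => by
    rw [hrec (t + 1) (mem_Icc.mpr ⟨by omega, by omega⟩), isoStep, ha_sq, Nat.add_sub_cancel]
    congr 2
    ring
  have hsum : ∑ t ∈ Icc 1 T, a t ^ 2 = q / 2 * ∑ t ∈ Icc 1 T, ‖ℓ t‖ ^ 2 := by
    simp only [ha_sq, mul_sum]
  have haM : ∀ t ∈ Icc 1 T, a t ≤ √(q / 2) * (Icc 1 T).sup' (nonempty_Icc.mpr hT) (‖ℓ ·‖) :=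
    fun t ht => mul_le_mul_of_nonneg_left (le_sup' (‖ℓ ·‖) ht) (Real.sqrt_nonneg _)
  have hM0 := (ha 1).trans (haM 1 (mem_Icc.mpr ⟨le_rfl, hT⟩))
  constructor
  · rw [← hsum, ← Real.sqrt_sq (nonneg_of_isoStep hΔ0 hΔ T le_rfl)]
    exact Real.sqrt_le_sqrt (sum_sq_le_sq_of_isoStep ha hΔ0 hΔ T le_rfl)
  · have := le_sqrt_two_mul_sum_sq_add_of_isoStep ha hM0 haM hΔ0 hΔ T le_rfl
    rwa [hsum, ← mul_assoc, mul_div_cancel₀ _ two_ne_zero] at this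
end
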